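/- Every sequential T1 topological group with countable cs*-character which is an α₇-space is metrizable. -/

import Mathlib

/-!
Close a countable cs*-network at `1` under finite unions and products and add `{1}`. If no member
inside some neighbourhood `U` of `1` were a sequential barrier at `1`, take `V * V ⊆ U` and an
increasing sequence `K₀ ⊆ K₁ ⊆ ⋯` cofinal among the members inside `V`; one then builds sequences
`σₙ → 1` with `σₘ` disjoint from `σₙ * Kₙ` for `n < m`. A sequence `t` converging to some `y` and
meeting infinitely many `σₙ` gives quotients `tₖ⁻¹ tₖ₊₁ → 1`, infinitely many of which lie in one
`Kᵢ`; this puts a point of a later `σ` into an earlier `σₙ * Kₙ`. So by α₇ the barriers in the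
network form a countable sb-network at `1`. In a sequential group this makes sequential closure
idempotent (translate approximating sequences to `1` and diagonalise through the barriers), so the
group is Fréchet–Urysohn; there a barrier containing `1` is a neighbourhood of `1`, so the group is
first countable, hence metrizable.
-/

open Set Filter Topology Cardinal Pointwise

universe u v

section Defs

variable {X : Type u} [TopologicalSpace X]

/-- A sequence converging to `x`: a countably infinite set `S` such that `S \ U` is finite
for every neighborhood `U` of `x`. -/
def ConvSeqTo (S : Set X) (x : X) : Prop :=
  S.Countable ∧ S.Infinite ∧ ∀ U ∈ 𝓝 x, (S \ U).Finite

/-- `𝒩` is a cs*-network at `x`: for every neighborhood `U` of `x` and every sequence `S`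
converging to `x` there is `N ∈ 𝒩` with `N ⊆ U` containing infinitely many members of `S`. -/
def IsCsStarNetworkAt (𝒩 : Set (Set X)) (x : X) : Prop :=
  ∀ U ∈ 𝓝 x, ∀ S : Set X, ConvSeqTo S x → ∃ N ∈ 𝒩, N ⊆ U ∧ (S ∩ N).Infinite

/-- `𝒩` is a cs-network at `x`: for every neighborhood `U` of `x` and every sequence `S`
converging to `x` there is `N ∈ 𝒩` with `N ⊆ U` containing all but finitely many members. -/
def IsCsNetworkAt (𝒩 : Set (Set X)) (x : X) : Prop :=
  ∀ U ∈ 𝓝 x, ∀ S : Set X, ConvSeqTo S x → ∃ N ∈ 𝒩, N ⊆ U ∧ (S \ N).Finite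

/-- `B` is a sequential barrier at `x`: every sequence converging to `x` lies eventually in `B`. -/
def IsSeqBarrierAt (B : Set X) (x : X) : Prop :=
  ∀ S : Set X, ConvSeqTo S x → (S \ B).Finite

/-- `𝒩` is an sb-network at `x`. -/
def IsSbNetworkAt (𝒩 : Set (Set X)) (x : X) : Prop :=
  ∀ U ∈ 𝓝 x, ∃ N ∈ 𝒩, x ∈ N ∧ N ⊆ U ∧ IsSeqBarrierAt N x

/-- `𝒩` is a neighborhood base at `x`. -/
def IsNbhdBasisAt (𝒩 : Set (Set X)) (x : X) : Prop :=
  (∀ N ∈ 𝒩, N ∈ 𝓝 x) ∧ ∀ U ∈ 𝓝 x, ∃ N ∈ 𝒩, N ⊆ U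

/-- Smallest cardinality of a cs*-network at `x`. -/
noncomputable def csStarCharAt (x : X) : Cardinal.{u} :=
  sInf {c | ∃ 𝒩 : Set (Set X), IsCsStarNetworkAt 𝒩 x ∧ #𝒩 = c}

/-- Smallest cardinality of a cs-network at `x`. -/
noncomputable def csCharAt (x : X) : Cardinal.{u} :=
  sInf {c | ∃ 𝒩 : Set (Set X), IsCsNetworkAt 𝒩 x ∧ #𝒩 = c}

/-- Smallest cardinality of an sb-network at `x`. -/
noncomputable def sbCharAt (x : X) : Cardinal.{u} :=
  sInf {c | ∃ 𝒩 : Set (Set X), IsSbNetworkAt 𝒩 x ∧ #𝒩 = c}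

/-- Smallest cardinality of a neighborhood base at `x`. -/
noncomputable def charAt (x : X) : Cardinal.{u} :=
  sInf {c | ∃ 𝒩 : Set (Set X), IsNbhdBasisAt 𝒩 x ∧ #𝒩 = c}

end Defs

/-- The cs*-character of a space (`1` for the empty space). -/
noncomputable def csStarChar (X : Type u) [TopologicalSpace X] : Cardinal.{u} :=
  max 1 (⨆ x : X, csStarCharAt x)

/-- The cs-character of a space (`1` for the empty space). -/
noncomputable def csChar (X : Type u) [TopologicalSpace X] : Cardinal.{u} :=
  max 1 (⨆ x : X, csCharAt x)

/-- The sb-character of a space (`1` for the empty space). -/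
noncomputable def sbChar (X : Type u) [TopologicalSpace X] : Cardinal.{u} :=
  max 1 (⨆ x : X, sbCharAt x)

/-- The character of a space (`1` for the empty space). -/
noncomputable def charCard (X : Type u) [TopologicalSpace X] : Cardinal.{u} :=
  max 1 (⨆ x : X, charAt x)

/-- `X` has countable cs*-character: every point has a countable cs*-network. -/
def CountableCsStarChar (X : Type u) [TopologicalSpace X] : Prop :=
  ∀ x : X, ∃ 𝒩 : Set (Set X), 𝒩.Countable ∧ IsCsStarNetworkAt 𝒩 x

/-- `X` has countable sb-character: every point has a countable sb-network. -/
def CountableSbChar (X : Type u) [TopologicalSpace X] : Prop :=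
  ∀ x : X, ∃ 𝒩 : Set (Set X), 𝒩.Countable ∧ IsSbNetworkAt 𝒩 x

/-- `X` carries the inductive topology with respect to the cover `𝒞`: a set is closed iff its
trace on each `C ∈ 𝒞` is closed in the subspace `C`. -/
def InductiveTopology (X : Type u) [TopologicalSpace X] (𝒞 : Set (Set X)) : Prop :=
  ∀ F : Set X, IsClosed F ↔ ∀ C ∈ 𝒞, IsClosed (Subtype.val ⁻¹' F : Set C)

/-- A `k_ω`-space: inductive topology w.r.t. a countable cover by compact sets. -/
def IsKOmegaSpace (X : Type u) [TopologicalSpace X] : Prop :=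
  ∃ 𝒞 : Set (Set X), 𝒞.Countable ∧ ⋃₀ 𝒞 = Set.univ ∧ (∀ C ∈ 𝒞, IsCompact C) ∧
    InductiveTopology X 𝒞

/-- An `MK_ω`-space: inductive topology w.r.t. a countable cover by compact metrizable sets. -/
def IsMKOmegaSpace (X : Type u) [TopologicalSpace X] : Prop :=
  ∃ 𝒞 : Set (Set X), 𝒞.Countable ∧ ⋃₀ 𝒞 = Set.univ ∧
    (∀ C ∈ 𝒞, IsCompact C ∧ TopologicalSpace.MetrizableSpace C) ∧ InductiveTopology X 𝒞

/-- An `M_ω`-space: inductive topology w.r.t. a countable cover by closed metrizable sets. -/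
def IsMOmegaSpace (X : Type u) [TopologicalSpace X] : Prop :=
  ∃ 𝒞 : Set (Set X), 𝒞.Countable ∧ ⋃₀ 𝒞 = Set.univ ∧
    (∀ C ∈ 𝒞, IsClosed C ∧ TopologicalSpace.MetrizableSpace C) ∧ InductiveTopology X 𝒞

/-- An α₄-space: given countably many sequences converging to a common point `x`, some sequence
converging to `x` meets infinitely many of them. -/
def Alpha4Space (X : Type u) [TopologicalSpace X] : Prop :=
  ∀ (x : X) (S : ℕ → Set X), (∀ n, ConvSeqTo (S n) x) →
    ∃ T : Set X, ConvSeqTo T x ∧ {n | (T ∩ S n).Nonempty}.Infinite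

/-- An α₇-space: given countably many sequences converging to a common point `x`, some sequence
converging to some point `y` meets infinitely many of them. -/
def Alpha7Space (X : Type u) [TopologicalSpace X] : Prop :=
  ∀ (x : X) (S : ℕ → Set X), (∀ n, ConvSeqTo (S n) x) →
    ∃ (T : Set X) (y : X), ConvSeqTo T y ∧ {n | (T ∩ S n).Nonempty}.Infinite

/-- The small cardinal 𝔭: the smallest cardinality of a family of infinite subsets of ω closed
under finite intersections and having no infinite pseudo-intersection. -/
noncomputable def pCard : Cardinal.{0} :=
  sInf {c | ∃ F : Set (Set ℕ), (∀ A ∈ F, A.Infinite) ∧ (∀ A ∈ F, ∀ B ∈ F, A ∩ B ∈ F) ∧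
    (¬ ∃ I : Set ℕ, I.Infinite ∧ ∀ A ∈ F, (I \ A).Finite) ∧ #F = c}

/-- The small cardinal 𝔡: the smallest cardinality of a dominating family in `ℕ → ℕ`. -/
noncomputable def dCard : Cardinal.{0} :=
  sInf {c | ∃ D : Set (ℕ → ℕ), (∀ f : ℕ → ℕ, ∃ g ∈ D, ∀ n, f n ≤ g n) ∧ #D = c}

/-- The pseudocharacter of `X`: the least `c` such that every singleton is the intersection of a
family of at most `c` open sets. -/
noncomputable def psiChar (X : Type u) [TopologicalSpace X] : Cardinal.{u} :=
  sInf {c | ∀ x : X, ∃ 𝒰 : Set (Set X), (∀ U ∈ 𝒰, IsOpen U) ∧ ⋂₀ 𝒰 = {x} ∧ #𝒰 ≤ c}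

/-- The weight of `X`: the smallest cardinality of a base of the topology. -/
noncomputable def weightCard (X : Type u) [TopologicalSpace X] : Cardinal.{u} :=
  sInf {c | ∃ B : Set (Set X), TopologicalSpace.IsTopologicalBasis B ∧ #B = c}

/-- Transfinite iteration of the sequential closure: `A^{(α)}`. -/
noncomputable def seqClIter {X : Type u} [TopologicalSpace X] (A : Set X) :
    Ordinal.{0} → Set X
  | α => A ∪ ⋃ β : {β : Ordinal.{0} // β < α}, seqClosure (seqClIter A β.1)
termination_by α => α
decreasing_by exact β.2

/-- The sequential order of `X`: the least ordinal `α` with `A^{(α+1)} = A^{(α)}` for all `A`. -/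
noncomputable def seqOrder (X : Type u) [TopologicalSpace X] : Ordinal.{0} :=
  sInf {α | ∀ A : Set X, seqClIter A (α + 1) = seqClIter A α}

/-- The cardinality `|[κ]^{≤ω}|` of the family of countable subsets of (a set of cardinality)
`κ`. -/
noncomputable def countableSubsetsCard (c : Cardinal.{u}) : Cardinal.{u} :=
  #{A : Set (Quotient.out c) // A.Countable}

/-- The space `𝕃 = {(0,0)} ∪ {(1/n, 1/(nm)) : n,m ∈ ℕ}` as a subspace of `ℝ²`. -/
def LSpace : Set (ℝ × ℝ) :=
  {(0, 0)} ∪ {p | ∃ n m : ℕ, 0 < n ∧ 0 < m ∧ p = (1 / (n : ℝ), 1 / ((n : ℝ) * (m : ℝ)))}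


section Order

variable {α : Type*}

theorem Set.Countable.exists_superset_closed₂ {s : Set α} (hs : s.Countable)
    (f g : α → α → α) :
    ∃ t, s ⊆ t ∧ t.Countable ∧ (∀ a ∈ t, ∀ b ∈ t, f a b ∈ t) ∧ ∀ a ∈ t, ∀ b ∈ t, g a b ∈ t := by
  set F : ℕ → Set α := fun n => (fun u => u ∪ Set.image2 f u u ∪ Set.image2 g u u)^[n] s
  have hFsucc : ∀ n, F (n + 1) = F n ∪ Set.image2 f (F n) (F n) ∪ Set.image2 g (F n) (F n) :=
    fun n => Function.iterate_succ_apply' _ n s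
  have hFmono : Monotone F := monotone_nat_of_le_succ fun n => by
    rw [hFsucc]; exact subset_union_left.trans subset_union_left
  have hcommon : ∀ a ∈ ⋃ n, F n, ∀ b ∈ ⋃ n, F n, ∃ n, a ∈ F n ∧ b ∈ F n := by
    simp only [mem_iUnion]
    rintro a ⟨p, hp⟩ b ⟨q, hq⟩
    exact ⟨max p q, hFmono (le_max_left p q) hp, hFmono (le_max_right p q) hq⟩
  refine ⟨⋃ n, F n, subset_iUnion F 0, countable_iUnion fun n => ?_, fun a ha b hb => ?_,
    fun a ha b hb => ?_⟩
  · induction n with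
    | zero => exact hs
    | succ n ih => rw [hFsucc]; exact (ih.union (ih.image2 ih _)).union (ih.image2 ih _)
  · obtain ⟨n, han, hbn⟩ := hcommon a ha b hb
    exact mem_iUnion.2 ⟨n + 1, hFsucc n ▸ Or.inl (Or.inr (mem_image2_of_mem han hbn))⟩
  · obtain ⟨n, han, hbn⟩ := hcommon a ha b hb
    exact mem_iUnion.2 ⟨n + 1, hFsucc n ▸ Or.inr (mem_image2_of_mem han hbn)⟩

theorem Set.Countable.exists_monotone_cofinal [SemilatticeSup α] {s : Set α} (hs : s.Countable)
    (hsup : ∀ a ∈ s, ∀ b ∈ s, a ⊔ b ∈ s) {a₀ : α} (ha₀ : a₀ ∈ s) :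
    ∃ K : ℕ → α, K 0 = a₀ ∧ Monotone K ∧ (∀ n, K n ∈ s) ∧ ∀ a ∈ s, ∃ n, a ≤ K n := by
  obtain ⟨e, rfl⟩ := hs.exists_eq_range ⟨a₀, ha₀⟩
  let K : ℕ → α := fun n => Nat.rec a₀ (fun n b => b ⊔ e n) n
  have hKsucc : ∀ n, K (n + 1) = K n ⊔ e n := fun _ => rfl
  have hKmem : ∀ n, K n ∈ range e := fun n => by
    induction n with
    | zero => exact ha₀
    | succ n ih => rw [hKsucc]; exact hsup _ ih _ (mem_range_self n)
  refine ⟨K, rfl, monotone_nat_of_le_succ fun n => hKsucc n ▸ le_sup_left, hKmem, ?_⟩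
  rintro _ ⟨n, rfl⟩
  exact ⟨n + 1, hKsucc n ▸ le_sup_right⟩

end Order

section Sequences

variable {X : Type u} [TopologicalSpace X] {S T : Set X} {x : X}

theorem ConvSeqTo.mono (h : ConvSeqTo S x) (hTS : T ⊆ S) (hT : T.Infinite) : ConvSeqTo T x :=
  ⟨h.1.mono hTS, hT, fun U hU => (h.2.2 U hU).subset (sdiff_subset_sdiff_left hTS)⟩

theorem ConvSeqTo.tendsto (hS : ConvSeqTo S x) {f : ℕ → X} (hf : ∀ n, f n ∈ S)
    (hinj : Function.Injective f) : Tendsto f atTop (𝓝 x) := by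
  rw [← Nat.cofinite_eq_atTop]
  refine fun U hU => mem_cofinite.2 ((hS.2.2 U hU).preimage hinj.injOn |>.subset ?_)
  exact fun n hn => ⟨hf n, hn⟩

theorem convSeqTo_range [T1Space X] {f : ℕ → X} (hf : Tendsto f atTop (𝓝 x))
    (hne : ∀ n, f n ≠ x) : ConvSeqTo (range f) x := by
  refine ⟨countable_range f, fun hfin => ?_, fun U hU => ?_⟩
  · obtain ⟨n, hn⟩ := hfin.isClosed.mem_of_tendsto hf (Eventually.of_forall mem_range_self)
    exact hne n hn
  · have hfin : {n | f n ∉ U}.Finite := by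
      rw [← Nat.cofinite_eq_atTop] at hf
      exact eventually_cofinite.1 (hf.eventually_mem hU)
    refine (hfin.image f).subset ?_
    rintro _ ⟨⟨n, rfl⟩, hn⟩
    exact ⟨n, hn, rfl⟩

theorem IsCsStarNetworkAt.mono {𝒩 𝒩' : Set (Set X)} (h : IsCsStarNetworkAt 𝒩 x)
    (h𝒩 : 𝒩 ⊆ 𝒩') : IsCsStarNetworkAt 𝒩' x := fun U hU S hS =>
  let ⟨N, hN, hNU, hSN⟩ := h U hU S hS
  ⟨N, h𝒩 hN, hNU, hSN⟩

theorem IsSeqBarrierAt.mono {B C : Set X} (hB : IsSeqBarrierAt B x) (hBC : B ⊆ C) :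
    IsSeqBarrierAt C x := fun S hS => (hB S hS).subset (sdiff_subset_sdiff_right hBC)

theorem exists_convSeqTo_disjoint_of_not_isSeqBarrierAt {B : Set X}
    (h : ¬ IsSeqBarrierAt B x) : ∃ S, ConvSeqTo S x ∧ Disjoint S B := by
  simp only [IsSeqBarrierAt, not_forall] at h
  obtain ⟨S, hS, hinf⟩ := h
  exact ⟨S \ B, hS.mono sdiff_subset hinf, disjoint_sdiff_left⟩

theorem IsSeqBarrierAt.eventually_mem [T1Space X] {B : Set X} (hB : IsSeqBarrierAt B x)
    (hx : x ∈ B) {f : ℕ → X} (hf : Tendsto f atTop (𝓝 x)) : ∀ᶠ n in atTop, f n ∈ B := by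
  by_contra h
  obtain ⟨φ, hφ, hφB⟩ := extraction_of_frequently_atTop (not_eventually.1 h)
  have hS : ConvSeqTo (range fun n => f (φ n)) x :=
    convSeqTo_range (hf.comp hφ.tendsto_atTop) fun n hn => hφB n (hn ▸ hx)
  refine hS.2.1 ((hB _ hS).subset fun y hy => ⟨hy, ?_⟩)
  obtain ⟨n, rfl⟩ := hy
  exact hφB n

theorem IsSeqBarrierAt.mem_nhds [T1Space X] [FrechetUrysohnSpace X] {B : Set X}
    (hB : IsSeqBarrierAt B x) (hx : x ∈ B) : B ∈ 𝓝 x := by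
  by_contra h
  rw [← mem_interior_iff_mem_nhds, ← mem_compl_iff, ← closure_compl,
    mem_closure_iff_seq_limit] at h
  obtain ⟨f, hfB, hf⟩ := h
  obtain ⟨n, hn⟩ := (hB.eventually_mem hx hf).exists
  exact hfB n hn

theorem IsSbNetworkAt.isCountablyGenerated_nhds [T1Space X] [FrechetUrysohnSpace X]
    {𝒩 : Set (Set X)} (h : IsSbNetworkAt 𝒩 x) (hc : 𝒩.Countable) : (𝓝 x).IsCountablyGenerated := by
  refine ⟨⟨{N ∈ 𝒩 | x ∈ N ∧ IsSeqBarrierAt N x}, hc.mono (sep_subset _ _), le_antisymm ?_ ?_⟩⟩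
  · exact le_generate_iff.2 fun N hN => hN.2.2.mem_nhds hN.2.1
  · intro U hU
    obtain ⟨N, hN, hxN, hNU, hNb⟩ := h U hU
    exact mem_of_superset (mem_generate_of_mem ⟨hN, hxN, hNb⟩) hNU

end Sequences

section Fan

variable {X : Type u} [TopologicalSpace X] [Mul X] {x : X}

theorem exists_seq_convSeqTo_disjoint_mul {K : ℕ → Set X} (hK : Monotone K)
    (hcatch : ∀ S, ConvSeqTo S x → ∃ i, (S ∩ K i).Infinite)
    (havoid : ∀ i, ∃ S, ConvSeqTo S x ∧ Disjoint S (K i * K i)) :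
    ∃ σ : ℕ → Set X, (∀ n, ConvSeqTo (σ n) x) ∧ ∀ n m, n < m → Disjoint (σ m) (σ n * K n) := by
  -- The relation only sees pairs, so each term carries a level, strictly increasing along the
  -- sequence, and later terms avoid `σ * K level`.
  obtain ⟨f, hP, hr⟩ := exists_seq_of_forall_finset_exists
    (fun p : ℕ × Set X => ConvSeqTo p.2 x ∧ ∃ i, p.2 ⊆ K i)
    (fun p q => p.1 < q.1 ∧ Disjoint q.2 (p.2 * K p.1)) fun s hs => by
      have hc : ∀ᶠ c in atTop, ∀ p ∈ s, p.2 ⊆ K c ∧ p.1 < c := by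
        refine (eventually_all_finset s).2 fun p hp => ?_
        obtain ⟨i, hi⟩ := (hs p hp).2
        filter_upwards [eventually_ge_atTop i, eventually_gt_atTop p.1] with c hic hpc
        exact ⟨hi.trans (hK hic), hpc⟩
      obtain ⟨c, hc⟩ := hc.exists
      obtain ⟨S, hS, hSK⟩ := havoid c
      obtain ⟨i, hi⟩ := hcatch S hS
      refine ⟨(c, S ∩ K i), ⟨hS.mono inter_subset_left hi, i, inter_subset_right⟩,
        fun p hp => ⟨(hc p hp).2, ?_⟩⟩
      exact hSK.mono inter_subset_left (mul_subset_mul (hc p hp).1 (hK (hc p hp).2.le))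
  have hlevel : StrictMono fun n => (f n).1 := fun n m hnm => (hr n m hnm).1
  refine ⟨fun n => (f n).2, fun n => (hP n).1, fun n m hnm => ?_⟩
  exact (hr n m hnm).2.mono_right (mul_subset_mul_left (hK (hlevel.id_le n)))

end Fan

section Group

variable {G : Type u} [Group G] [TopologicalSpace G] [IsTopologicalGroup G]

theorem IsTopologicalGroup.metrizableSpace_of_isCountablyGenerated_nhds_one [T0Space G]
    [(𝓝 (1 : G)).IsCountablyGenerated] : TopologicalSpace.MetrizableSpace G := by
  let := IsTopologicalGroup.rightUniformSpace G
  have : (uniformity G).IsCountablyGenerated := by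
    rw [uniformity_eq_comap_nhds_one']
    infer_instance
  exact UniformSpace.metrizableSpace

theorem IsTopologicalGroup.frechetUrysohnSpace_of_countable_network [SequentialSpace G]
    {𝒩 : Set (Set G)} (hc : 𝒩.Countable) (hnet : ∀ U ∈ 𝓝 (1 : G), ∃ N ∈ 𝒩, N ⊆ U)
    (hseq : ∀ N ∈ 𝒩, ∀ f : ℕ → G, Tendsto f atTop (𝓝 1) → ∀ᶠ n in atTop, f n ∈ N) :
    FrechetUrysohnSpace G := by
  have : (generate 𝒩).IsCountablyGenerated := ⟨⟨𝒩, hc, rfl⟩⟩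
  obtain ⟨B, hB⟩ := (generate 𝒩).exists_antitone_basis
  have hle : generate 𝒩 ≤ 𝓝 1 := fun U hU =>
    let ⟨N, hN, hNU⟩ := hnet U hU
    mem_of_superset (mem_generate_of_mem hN) hNU
  refine ⟨fun s => closure_minimal subset_seqClosure (IsSeqClosed.isClosed ?_)⟩
  intro u z hu huz
  choose f hfs hf using hu
  -- Diagonalise: the quotients `(u k)⁻¹ * f k (n k)` lie in the antitone basis `B k` of a filter
  -- finer than `𝓝 1`, so they tend to `1`.
  have hnear : ∀ k, ∃ n, (u k)⁻¹ * f k n ∈ B k := fun k => by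
    have h1 : Tendsto (fun n => (u k)⁻¹ * f k n) atTop (𝓝 1) := by
      simpa using (hf k).const_mul (u k)⁻¹
    have h2 : Tendsto (fun n => (u k)⁻¹ * f k n) atTop (generate 𝒩) :=
      le_generate_iff.2 fun N hN => hseq N hN _ h1
    exact (h2.eventually (hB.mem k)).exists
  choose n hn using hnear
  refine ⟨fun k => f k (n k), fun k => hfs k _, ?_⟩
  simpa using huz.mul (hle.trans' (hB.tendsto hn))

theorem IsSbNetworkAt.frechetUrysohnSpace [T1Space G] [SequentialSpace G] {𝒩 : Set (Set G)}
    (h : IsSbNetworkAt 𝒩 1) (hc : 𝒩.Countable) : FrechetUrysohnSpace G := by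
  refine IsTopologicalGroup.frechetUrysohnSpace_of_countable_network
    (𝒩 := {N ∈ 𝒩 | (1 : G) ∈ N ∧ IsSeqBarrierAt N 1}) (hc.mono (sep_subset _ _)) ?_
    fun N hN f hf => hN.2.2.eventually_mem hN.2.1 hf
  intro U hU
  obtain ⟨N, hN, h1N, hNU, hNb⟩ := h U hU
  exact ⟨N, ⟨hN, h1N, hNb⟩, hNU⟩

theorem IsSbNetworkAt.metrizableSpace [T1Space G] [SequentialSpace G] {𝒩 : Set (Set G)}
    (h : IsSbNetworkAt 𝒩 1) (hc : 𝒩.Countable) : TopologicalSpace.MetrizableSpace G :=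
  haveI := h.frechetUrysohnSpace hc
  haveI := h.isCountablyGenerated_nhds hc
  IsTopologicalGroup.metrizableSpace_of_isCountablyGenerated_nhds_one

end Group

section Alpha7

variable {G : Type u} [Group G] [TopologicalSpace G] [IsTopologicalGroup G] [T1Space G]

theorem ConvSeqTo.finite_setOf_inter_nonempty {T : Set G} {y : G} (hT : ConvSeqTo T y)
    {K : ℕ → Set G} (hK : Monotone K) (h1 : (1 : G) ∈ K 0)
    (hcatch : ∀ S, ConvSeqTo S (1 : G) → ∃ i, (S ∩ K i).Infinite) {σ : ℕ → Set G}
    (hσ : ∀ n m, n < m → Disjoint (σ m) (σ n * K n)) :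
    {n | (T ∩ σ n).Nonempty}.Finite := by
  by_contra hinf
  set ψ := Nat.nth fun n => (T ∩ σ n).Nonempty
  have hψ : StrictMono ψ := Nat.nth_strictMono hinf
  choose t htT htσ using Nat.nth_mem_of_infinite hinf
  have hdisj : ∀ {n m}, n < m → Disjoint (σ m) (σ n) := fun hnm =>
    (hσ _ _ hnm).mono_right (subset_mul_left _ (hK (Nat.zero_le _) h1))
  have ht : Function.Injective t := by
    intro k l hkl
    by_contra hne
    rcases lt_or_gt_of_ne (hψ.injective.ne hne) with h | h
    · exact (hdisj h).ne_of_mem (htσ l) (hkl ▸ htσ k) rfl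
    · exact (hdisj h).ne_of_mem (htσ k) (hkl ▸ htσ l) rfl
  have htend : Tendsto t atTop (𝓝 y) := hT.tendsto htT ht
  set q : ℕ → G := fun k => (t k)⁻¹ * t (k + 1)
  have hq : ConvSeqTo (range q) 1 := by
    refine convSeqTo_range ?_ fun k hk => ?_
    · simpa using htend.inv.mul (htend.comp (tendsto_add_atTop_nat 1))
    · exact (k.succ_ne_self) (ht (inv_mul_eq_one.1 hk).symm)
  obtain ⟨i, hi⟩ := hcatch _ hq
  have hiq : {k | q k ∈ K i}.Infinite := by
    intro hfin
    refine hi ((hfin.image q).subset ?_)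
    rintro _ ⟨⟨k, rfl⟩, hkK⟩
    exact ⟨k, hkK, rfl⟩
  obtain ⟨k, hkK, hik⟩ := hiq.exists_gt i
  have hmem : t (k + 1) ∈ σ (ψ k) * K (ψ k) :=
    ⟨t k, htσ k, q k, hK (hik.le.trans (hψ.id_le k)) hkK, mul_inv_cancel_left _ _⟩
  exact (hσ _ _ (hψ k.lt_succ_self)).ne_of_mem (htσ (k + 1)) hmem rfl

theorem Alpha7Space.exists_mem_subset_isSeqBarrierAt (ha7 : Alpha7Space G) {M : Set (Set G)}
    (hM : IsCsStarNetworkAt M 1) (hMc : M.Countable) (h1 : {1} ∈ M)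
    (hunion : ∀ A ∈ M, ∀ B ∈ M, A ∪ B ∈ M) (hmul : ∀ A ∈ M, ∀ B ∈ M, A * B ∈ M)
    {U : Set G} (hU : U ∈ 𝓝 1) : ∃ N ∈ M, N ⊆ U ∧ IsSeqBarrierAt N 1 := by
  by_contra! hno
  obtain ⟨V, hVo, hV1, hVU⟩ := exists_open_nhds_one_mul_subset hU
  obtain ⟨K, hK0, hK, hKM, hKcof⟩ := (hMc.mono (sep_subset M (· ⊆ V))).exists_monotone_cofinal
    (fun A hA B hB => ⟨hunion A hA.1 B hB.1, union_subset hA.2 hB.2⟩)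
    (a₀ := {1}) ⟨h1, singleton_subset_iff.2 hV1⟩
  have hcatch : ∀ S, ConvSeqTo S (1 : G) → ∃ i, (S ∩ K i).Infinite := fun S hS => by
    obtain ⟨N, hNM, hNV, hSN⟩ := hM V (hVo.mem_nhds hV1) S hS
    obtain ⟨i, hi⟩ := hKcof N ⟨hNM, hNV⟩
    exact ⟨i, hSN.mono (inter_subset_inter_right S hi)⟩
  have havoid : ∀ i, ∃ S, ConvSeqTo S (1 : G) ∧ Disjoint S (K i * K i) := fun i =>
    exists_convSeqTo_disjoint_of_not_isSeqBarrierAt <| hno _ (hmul _ (hKM i).1 _ (hKM i).1)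
      ((mul_subset_mul (hKM i).2 (hKM i).2).trans hVU)
  obtain ⟨σ, hσ, hσK⟩ := exists_seq_convSeqTo_disjoint_mul hK hcatch havoid
  obtain ⟨T, y, hT, hTσ⟩ := ha7 1 σ hσ
  exact hTσ (hT.finite_setOf_inter_nonempty hK (hK0 ▸ mem_singleton 1) hcatch hσK)

end Alpha7

/-- Every sequential T1 topological group with countable cs*-character which is an α₇-space is
metrizable. -/
theorem alpha7_group_metrizable (G : Type u) [Group G] [TopologicalSpace G]
    [IsTopologicalGroup G] [T1Space G] [SequentialSpace G] (hcs : CountableCsStarChar G)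
    (ha7 : Alpha7Space G) :
    TopologicalSpace.MetrizableSpace G := by
  obtain ⟨𝒩, h𝒩c, h𝒩⟩ := hcs 1
  obtain ⟨M, h𝒩M, hMc, hunion, hmul⟩ :=
    (h𝒩c.insert {1}).exists_superset_closed₂ (· ∪ ·) (· * ·)
  have h1 : {1} ∈ M := h𝒩M (mem_insert _ _)
  have hM : IsCsStarNetworkAt M 1 := h𝒩.mono ((subset_insert _ _).trans h𝒩M)
  have hsb : IsSbNetworkAt M 1 := fun U hU => by
    obtain ⟨N, hNM, hNU, hN⟩ := ha7.exists_mem_subset_isSeqBarrierAt hM hMc h1 hunion hmul hU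
    exact ⟨N ∪ {1}, hunion _ hNM _ h1, Or.inr rfl,
      union_subset hNU (singleton_subset_iff.2 (mem_of_mem_nhds hU)), hN.mono subset_union_left⟩
  exact hsb.metrizableSpace hMc
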